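/- arXiv:2008.06740 — 2 statements merged into one kernel-verified Lean document; each statement's English description precedes it below -/
import Mathlib

section
/- Let C be a shortest even hole of a graph G, let u and v be distinct vertices of C, and let the uv-path P of G be a C-shallow worst C-shortcut. Then every uv-path P_uv of G satisfies ‖P‖ ≤ ‖P_uv‖. -/
open SimpleGraph

variable {V : Type*}

/-- The vertex set of a walk. -/
def suppSet {G : SimpleGraph V} {u v : V} (w : G.Walk u v) : Set V :=
  {x | x ∈ w.support}

/-- An induced cycle of `G`. -/
def IsInducedCycle (G : SimpleGraph V) {r : V} (w : G.Walk r r) : Prop :=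
  w.IsCycle ∧ ∀ a b : V, a ∈ w.support → b ∈ w.support → G.Adj a b → s(a, b) ∈ w.edges

/-- A hole of `G`: an induced cycle with at least 4 vertices. -/
def IsHole (G : SimpleGraph V) {r : V} (w : G.Walk r r) : Prop :=
  IsInducedCycle G w ∧ 4 ≤ w.length

/-- An even hole of `G`. -/
def IsEvenHole (G : SimpleGraph V) {r : V} (w : G.Walk r r) : Prop :=
  IsHole G w ∧ Even w.length

/-- A shortest even hole of `G`. -/
def IsShortestEvenHole (G : SimpleGraph V) {r : V} (w : G.Walk r r) : Prop :=
  IsEvenHole G w ∧ ∀ (y : V) (w' : G.Walk y y), IsEvenHole G w' → w.length ≤ w'.length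

/-- `P` is a path of `G` all of whose edges lie on the walk `c`
(used for "a `uv`-path of `C`"). -/
def IsPathOf (G : SimpleGraph V) {p q u v : V} (c : G.Walk p q) (P : G.Walk u v) : Prop :=
  P.IsPath ∧ ∀ e ∈ P.edges, e ∈ c.edges

/-- The distance `d_C(u,v)` between `u` and `v` within the cycle `c`. -/
noncomputable def cycleDist (G : SimpleGraph V) {r : V} (c : G.Walk r r) (u v : V) : ℕ :=
  sInf {n | ∃ P : G.Walk u v, IsPathOf G c P ∧ P.length = n}

/-- The induced subgraph `G[S]` is a hole of `G`. -/
def IsHoleOn (G : SimpleGraph V) (S : Set V) : Prop :=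
  ∃ (r : V) (w : G.Walk r r), IsHole G w ∧ suppSet w = S

/-- The induced subgraph `G[S]` is an even hole of `G`. -/
def IsEvenHoleOn (G : SimpleGraph V) (S : Set V) : Prop :=
  ∃ (r : V) (w : G.Walk r r), IsEvenHole G w ∧ suppSet w = S

/-- The induced subgraph `G[S]` is a shortest even hole of `G`. -/
def IsShortestEvenHoleOn (G : SimpleGraph V) (S : Set V) : Prop :=
  ∃ (r : V) (w : G.Walk r r), IsShortestEvenHole G w ∧ suppSet w = S

/-- `P` is `C`-good: the union of `P` and one of the two `uv`-paths of `C`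
is again a shortest even hole of `G`. -/
def CGood (G : SimpleGraph V) {r u v : V} (c : G.Walk r r) (P : G.Walk u v) : Prop :=
  ∃ Q : G.Walk u v, IsPathOf G c Q ∧ IsShortestEvenHoleOn G (suppSet P ∪ suppSet Q)

/-- The standing assumptions for `C`-shortcuts: `P` is a `uv`-path of `G` for distinct
nonadjacent vertices `u`, `v` of `C`. -/
def ShortcutSetup (G : SimpleGraph V) {r u v : V} (c : G.Walk r r) (P : G.Walk u v) : Prop :=
  P.IsPath ∧ u ≠ v ∧ ¬G.Adj u v ∧ u ∈ c.support ∧ v ∈ c.support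

/-- `P` is a `C`-shortcut: `2 ≤ ‖P‖ ≤ d_C(u,v)` and `‖P‖ < ‖C‖/4`. -/
def CShortcut (G : SimpleGraph V) {r u v : V} (c : G.Walk r r) (P : G.Walk u v) : Prop :=
  2 ≤ P.length ∧ P.length ≤ cycleDist G c u v ∧ 4 * P.length < c.length

/-- `C1` and `C2` are the two `uv`-paths of the cycle `c`. -/
def ArcPair (G : SimpleGraph V) {r u v : V} (c : G.Walk r r) (C1 C2 : G.Walk u v) : Prop :=
  IsPathOf G c C1 ∧ IsPathOf G c C2 ∧ C1.length + C2.length = c.length ∧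
    ∀ e ∈ c.edges, e ∈ C1.edges ∨ e ∈ C2.edges

/-- `P` is `C`-shallow: `‖P‖ ≥ d_C(u,v) − 1` and `G[P ∪ C2]` is a hole, where `C2` is the
longer of the two `uv`-paths of `C`. -/
def CShallow (G : SimpleGraph V) {r u v : V} (c : G.Walk r r) (P : G.Walk u v) : Prop :=
  cycleDist G c u v - 1 ≤ P.length ∧
    ∀ C1 C2 : G.Walk u v, ArcPair G c C1 C2 → C1.length ≤ C2.length →
      IsHoleOn G (suppSet P ∪ suppSet C2)

/-- `P` is a worst `C`-shortcut. -/
def WorstCShortcut (G : SimpleGraph V) {r u v : V} (c : G.Walk r r) (P : G.Walk u v) : Prop :=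
  ShortcutSetup G c P ∧ CShortcut G c P ∧ ¬CGood G c P ∧
    ∀ (u' v' : V) (P' : G.Walk u' v'),
      ShortcutSetup G c P' → CShortcut G c P' → ¬CGood G c P' →
        (P.length < P'.length ∨
          (P.length = P'.length ∧ cycleDist G c u' v' ≤ cycleDist G c u v))

/-- `C` is good in `G`: every `C`-shortcut is `C`-good. -/
def GoodHole (G : SimpleGraph V) {r : V} (c : G.Walk r r) : Prop :=
  ∀ (u v : V) (P : G.Walk u v), ShortcutSetup G c P → CShortcut G c P → CGood G c P

/-- `P` is a shortest `uv`-path of `G`. -/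
def IsShortestPath (G : SimpleGraph V) {u v : V} (P : G.Walk u v) : Prop :=
  P.IsPath ∧ ∀ Q : G.Walk u v, P.length ≤ Q.length

/-- The closed neighborhood `N_G[S]` of a vertex set `S`. -/
def closedNbhd (G : SimpleGraph V) (S : Set V) : Set V :=
  S ∪ {x | ∃ y ∈ S, G.Adj y x}

/-- The subgraph of `G` induced on `S` (kept on the same vertex type: edges of `G`
with both ends in `S`). -/
def restrictTo (G : SimpleGraph V) (S : Set V) : SimpleGraph V where
  Adj a b := G.Adj a b ∧ a ∈ S ∧ b ∈ S
  symm := ⟨fun a b h => ⟨h.1.symm, h.2.2, h.2.1⟩⟩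
  loopless := ⟨fun a h => G.loopless.irrefl a h.1⟩

/-- The vertex set of `H(u,v,x,y) = G[(V(G) \ N_G[V(P_uv ∪ P_xy) \ {u,v}]) ∪ {u,v}]`. -/
def Hverts (G : SimpleGraph V) {u v a b : V} (Puv : G.Walk u v) (Pxy : G.Walk a b) : Set V :=
  (Set.univ \ closedNbhd G ((suppSet Puv ∪ suppSet Pxy) \ {u, v})) ∪ {u, v}

/-- The graph `H(u,v,x,y)`. -/
def Hgraph (G : SimpleGraph V) {u v a b : V} (Puv : G.Walk u v) (Pxy : G.Walk a b) :
    SimpleGraph V :=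
  restrictTo G (Hverts G Puv Pxy)

/-- `G` is shallow. -/
def ShallowGraph (G : SimpleGraph V) : Prop :=
  ∃ (r : V) (c : G.Walk r r), IsShortestEvenHole G c ∧
    ∀ (u v : V) (P : G.Walk u v), WorstCShortcut G c P → CShallow G c P

/-- `G` is anti-shallow. -/
def AntiShallowGraph (G : SimpleGraph V) : Prop :=
  ∀ (r : V) (c : G.Walk r r), IsShortestEvenHole G c → ¬GoodHole G c →
    ∀ (u v : V) (P : G.Walk u v), WorstCShortcut G c P → ¬CShallow G c P

/-- The induced subgraph `G[S]` is a path with end-vertices `u` and `v`. -/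
def IsInducedPathOn (G : SimpleGraph V) (u v : V) (S : Set V) : Prop :=
  ∃ Q : G.Walk u v, Q.IsPath ∧ suppSet Q = S ∧
    ∀ a b : V, a ∈ S → b ∈ S → G.Adj a b → s(a, b) ∈ Q.edges

/-!
If some `uv`-path `Puv` were shorter than `P`, it would be a `C`-shortcut strictly shorter than
the worst one, hence `C`-good: together with a `uv`-path `Q` of `C` it spans a shortest even
hole, so `‖C‖ ≤ ‖Puv‖ + ‖Q‖`. The arc of `C` complementary to `Q` then has length at most
`‖Puv‖ < ‖P‖ ≤ d_C(u,v)`, which is absurd.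
-/

namespace SimpleGraph.Walk

variable {G : SimpleGraph V}

lemma two_le_length_of_not_adj {u v : V} (huv : u ≠ v) (hadj : ¬G.Adj u v) (p : G.Walk u v) :
    2 ≤ p.length := by
  by_contra! hlt
  interval_cases h : p.length
  · exact huv (eq_of_length_eq_zero h)
  · exact hadj (adj_of_length_eq_one h)

lemma IsPath.exists_eq_append_of_edges_subset {w v b : V} {q : G.Walk w v} {p : G.Walk w b}
    (hq : q.IsPath) (hp : p.IsPath) (hsub : q.edges ⊆ p.edges) :
    ∃ r : G.Walk v b, p = q.append r := by
  induction q with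
  | nil => exact ⟨p, rfl⟩
  | @cons w x v h q ih =>
    cases p with
    | nil => simp at hsub
    | @cons _ y _ h' p =>
      have hw : w ∉ q.support := ((cons_isPath_iff h q).mp hq).2
      have hw' : w ∉ p.support := ((cons_isPath_iff h' p).mp hp).2
      have hfirst : s(w, x) ∈ s(w, y) :: p.edges := hsub (by simp)
      obtain rfl : x = y := by
        rcases List.mem_cons.mp hfirst with he | he
        · exact Sym2.congr_right.mp he
        · exact absurd (p.fst_mem_support_of_mem_edges he) hw'
      have hsub' : q.edges ⊆ p.edges := fun e he => by
        rcases List.mem_cons.mp (hsub (List.mem_cons_of_mem _ he)) with rfl | he'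
        · exact absurd (q.fst_mem_support_of_mem_edges he) hw
        · exact he'
      obtain ⟨r, rfl⟩ := ih hq.of_cons hp.of_cons hsub'
      exact ⟨r, rfl⟩

lemma IsCycle.exists_complement_of_cons {u w v : V} {h : G.Adj u w} {p : G.Walk w u}
    {q : G.Walk w v} (hc : (cons h p).IsCycle) (hq : (cons h q).IsPath)
    (hsub : (cons h q).edges ⊆ (cons h p).edges) :
    ∃ r : G.Walk v u, r.IsPath ∧ r.edges ⊆ (cons h p).edges ∧
      (cons h q).length + r.length = (cons h p).length := by
  have hp : p.IsPath := ((cons_isCycle_iff p h).mp hc).1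
  have hu : u ∉ q.support := ((cons_isPath_iff h q).mp hq).2
  have hsub' : q.edges ⊆ p.edges := fun e he => by
    rcases List.mem_cons.mp (hsub (List.mem_cons_of_mem _ he)) with rfl | he'
    · exact absurd (q.fst_mem_support_of_mem_edges he) hu
    · exact he'
  obtain ⟨r, rfl⟩ := hq.of_cons.exists_eq_append_of_edges_subset hp hsub'
  refine ⟨r, hp.of_append_right, fun e he => ?_, ?_⟩
  · simp [he]
  · simp only [length_cons, length_append]
    omega

lemma IsCycle.exists_complement {u v : V} {c : G.Walk u u} (hc : c.IsCycle) {q : G.Walk u v}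
    (hq : q.IsPath) (huv : u ≠ v) (hsub : q.edges ⊆ c.edges) :
    ∃ r : G.Walk v u, r.IsPath ∧ r.edges ⊆ c.edges ∧ q.length + r.length = c.length := by
  cases c with
  | nil => exact absurd rfl hc.ne_nil
  | @cons _ w _ h p =>
  cases q with
  | nil => exact absurd rfl huv
  | @cons _ x _ h₁ q =>
  rcases List.mem_cons.mp (hsub (by simp : s(u, x) ∈ (cons h₁ q).edges)) with he | he
  · obtain rfl : x = w := Sym2.congr_right.mp he
    exact hc.exists_complement_of_cons hq hsub
  · -- otherwise `q` starts along the reversed cycle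
    have hp : p.IsPath := ((cons_isCycle_iff p h).mp hc).1
    obtain ⟨p', hp'⟩ := h₁.isPath_toWalk.exists_eq_append_of_edges_subset hp.reverse
      (List.cons_subset.mpr ⟨by rwa [edges_reverse, List.mem_reverse], List.nil_subset _⟩)
    have hrev : (cons h p).reverse = cons h₁ (p'.append (cons h.symm nil)) := by
      rw [reverse_cons, hp']
      rfl
    have hsub' : (cons h₁ q).edges ⊆ (cons h p).reverse.edges := by
      rw [edges_reverse]
      exact fun e he => List.mem_reverse.mpr (hsub he)
    rw [hrev] at hsub'
    obtain ⟨r, hr, hrsub, hrlen⟩ := (hrev ▸ hc.reverse).exists_complement_of_cons hq hsub'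
    refine ⟨r, hr, fun e he => ?_, ?_⟩
    · rw [← hrev, edges_reverse] at hrsub
      exact List.mem_reverse.mp (hrsub he)
    · rw [hrlen, ← hrev, length_reverse]

lemma suppSet_eq_coe_toFinset [DecidableEq V] {u v : V} (p : G.Walk u v) :
    suppSet p = ↑p.support.toFinset := by
  ext x
  simp [suppSet]

lemma IsCycle.ncard_suppSet {r : V} {c : G.Walk r r} (hc : c.IsCycle) :
    (suppSet c).ncard = c.length := by
  classical
  -- the start vertex reappears at the end, so `support.tail` already lists every vertex once
  have hset : suppSet c = ↑c.support.tail.toFinset := by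
    ext x
    rw [suppSet, Set.mem_ofPred_eq, ← c.cons_tail_support, Finset.mem_coe, List.mem_toFinset,
      List.tail_cons, List.mem_cons, or_iff_right_iff_imp]
    rintro rfl
    exact c.end_mem_tail_support hc.not_nil
  rw [hset, Set.ncard_coe_finset, List.toFinset_card_of_nodup hc.support_nodup,
    List.length_tail, length_support, Nat.add_sub_cancel]

end SimpleGraph.Walk

section Shortcut

open Walk

variable {G : SimpleGraph V}

lemma ncard_suppSet_union_le {u v : V} (huv : u ≠ v) (p q : G.Walk u v) :
    (suppSet p ∪ suppSet q).ncard ≤ p.length + q.length := by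
  classical
  set A := p.support.toFinset
  set B := q.support.toFinset
  have hends : 2 ≤ (A ∩ B).card := by
    rw [← Finset.card_pair huv]
    exact Finset.card_le_card (by simp [A, B, Finset.insert_subset_iff])
  have hA : A.card ≤ p.length + 1 := length_support p ▸ p.support.toFinset_card_le
  have hB : B.card ≤ q.length + 1 := length_support q ▸ q.support.toFinset_card_le
  calc (suppSet p ∪ suppSet q).ncard = (A ∪ B).card := by
        rw [suppSet_eq_coe_toFinset, suppSet_eq_coe_toFinset, ← Finset.coe_union,
          Set.ncard_coe_finset]
    _ ≤ p.length + q.length := by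
        have := Finset.card_union_add_card_inter A B
        omega

lemma cycleDist_add_length_le {r u v : V} {c : G.Walk r r} (hc : c.IsCycle) (hu : u ∈ c.support)
    (huv : u ≠ v) {Q : G.Walk u v} (hQ : IsPathOf G c Q) :
    cycleDist G c u v + Q.length ≤ c.length := by
  classical
  have hrot := c.rotate_edges u hu
  obtain ⟨R, hR, hRsub, hlen⟩ := (hc.rotate hu).exists_complement hQ.1 huv
    (fun e he => hrot.mem_iff.mpr (hQ.2 e he))
  have : cycleDist G c u v ≤ R.reverse.length :=
    Nat.sInf_le ⟨R.reverse, ⟨hR.reverse, fun e he => hrot.mem_iff.mp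
      (hRsub (by simpa using he))⟩, rfl⟩
  rw [length_reverse] at this
  rw [length_rotate] at hlen
  omega

lemma CGood.exists_length_le {r u v : V} {c : G.Walk r r} (hc : IsShortestEvenHole G c)
    (huv : u ≠ v) {P : G.Walk u v} (hP : CGood G c P) :
    ∃ Q : G.Walk u v, IsPathOf G c Q ∧ c.length ≤ P.length + Q.length := by
  obtain ⟨Q, hQ, r', w, hw, hsupp⟩ := hP
  refine ⟨Q, hQ, ?_⟩
  calc c.length ≤ w.length := hc.2 r' w hw.1
    _ = (suppSet P ∪ suppSet Q).ncard := by rw [← hsupp, hw.1.1.1.1.ncard_suppSet]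
    _ ≤ P.length + Q.length := ncard_suppSet_union_le huv P Q

lemma WorstCShortcut.cGood_of_length_lt {r u v u' v' : V} {c : G.Walk r r} {P : G.Walk u v}
    (hP : WorstCShortcut G c P) {P' : G.Walk u' v'} (hsetup : ShortcutSetup G c P')
    (hshort : CShortcut G c P') (hlt : P'.length < P.length) : CGood G c P' := by
  by_contra hbad
  rcases hP.2.2.2 u' v' P' hsetup hshort hbad with h | ⟨h, -⟩ <;> omega

lemma WorstCShortcut.cShortcut_of_length_lt {r u v : V} {c : G.Walk r r} {P : G.Walk u v}
    (hP : WorstCShortcut G c P) {P' : G.Walk u v} (hlt : P'.length < P.length) :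
    CShortcut G c P' := by
  obtain ⟨⟨-, huv, hadj, -⟩, ⟨-, hdist, hquarter⟩, -⟩ := hP
  exact ⟨two_le_length_of_not_adj huv hadj P', by omega, by omega⟩

end Shortcut

theorem stmt2_general (G : SimpleGraph V) {r u v : V} (c : G.Walk r r)
    (hC : IsShortestEvenHole G c) (P : G.Walk u v)
    (hworst : WorstCShortcut G c P) :
    ∀ Puv : G.Walk u v, Puv.IsPath → P.length ≤ Puv.length := by
  intro Puv hPuv
  by_contra! hlt
  obtain ⟨-, huv, hadj, hu, hv⟩ := hworst.1
  have hgood : CGood G c Puv := hworst.cGood_of_length_lt ⟨hPuv, huv, hadj, hu, hv⟩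
    (hworst.cShortcut_of_length_lt hlt) hlt
  obtain ⟨Q, hQ, hlen⟩ := hgood.exists_length_le hC huv
  have hcomplement := cycleDist_add_length_le hC.1.1.1.1 hu huv hQ
  have hdist : P.length ≤ cycleDist G c u v := hworst.2.1.2.1
  omega

theorem stmt2 (G : SimpleGraph V) {r u v : V} (c : G.Walk r r)
    (hC : IsShortestEvenHole G c) (P : G.Walk u v)
    (hworst : WorstCShortcut G c P) (hshallow : CShallow G c P) :
    ∀ Puv : G.Walk u v, Puv.IsPath → P.length ≤ Puv.length :=
  stmt2_general G c hC P hworst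
end

section
/- Let C be a shortest even hole of a graph G, let u and v be distinct vertices of C, let the uv-path P of G be a C-shallow worst C-shortcut, and let C1, C2 be the uv-paths of C with ‖C1‖ < ‖C2‖. Then every uv-path P_uv of G with ‖P_uv‖ = ‖P‖ satisfies that G[P_uv ∪ C2] is a hole of G. -/
open SimpleGraph

variable {V : Type*}

/-!
Let `d = d_C(u,v) = ‖C1‖`. Comparing with the worst shortcut `P`, a shortest path of `G` between
two vertices `x`, `y` of `C` that is shorter than `P` has length at least `d_C(x,y)`, and one no
longer than `P` joins vertices with `d_C(x,y) ≤ d`. Hence `P` is a shortest `uv`-path and, by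
parity of the hole `P ∪ C2`, `‖P‖ = d - 1`. A `uv`-path `P_uv` of the same length is then
chordless; an interior vertex of `P_uv` on `C` would give `d ≤ ‖P‖` by the triangle inequality
for `d_C`; and an edge from the interior of `P_uv` to an interior vertex `z` of `C2` would give
`d_C(u,z), d_C(z,v) ≤ d`, hence `‖C2‖ ≤ 2d`, against `‖C‖ > 4‖P‖` and the evenness of `‖C‖`.
So `P_uv` and `C2` glue to a hole.
-/

section Cycles

open Walk

variable {G : SimpleGraph V} {r u v x y z : V} {c : G.Walk r r}

theorem SimpleGraph.Walk.IsCycle.eq_or_eq_or_eq_of_mk_mem_edges (hc : c.IsCycle) {a b d : V}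
    (ha : s(z, a) ∈ c.edges) (hb : s(z, b) ∈ c.edges) (hd : s(z, d) ∈ c.edges) :
    a = b ∨ a = d ∨ b = d := by
  have hN := hc.ncard_neighborSet_toSubgraph_eq_two (c.fst_mem_support_of_mem_edges ha)
  have hsub : {a, b, d} ⊆ c.toSubgraph.neighborSet z := by
    rintro w (rfl | rfl | rfl) <;>
      exact Subgraph.mem_edgeSet.mp ((c.mem_edges_toSubgraph).mpr ‹_›)
  by_contra! hne
  have h3 : ({a, b, d} : Set V).ncard = 3 :=
    Set.ncard_eq_three.mpr ⟨a, b, d, hne.1, hne.2.1, hne.2.2, rfl⟩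
  have := Set.ncard_le_ncard hsub (c.finite_neighborSet_toSubgraph)
  omega

theorem IsPathOf.mem_support {Q : G.Walk x y} (hQ : IsPathOf G c Q) (hxy : x ≠ y)
    (hz : z ∈ Q.support) : z ∈ c.support := by
  obtain ⟨e, he, hze⟩ := (mem_support_iff_exists_mem_edges_of_not_nil (not_nil_of_ne hxy)).mp hz
  exact mem_support_of_mem_edges (hQ.2 e he) hze

theorem IsPathOf.eq_of_snd_eq (hc : c.IsCycle) {Q A : G.Walk x y} (hQ : IsPathOf G c Q)
    (hA : IsPathOf G c A) (h : Q.snd = A.snd) : Q = A := by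
  induction Q with
  | nil => exact ((isPath_iff_nil.mp hA.1).eq_nil).symm
  | @cons x w y hxw Q ih =>
    cases A with
    | nil => exact absurd (isPath_iff_nil.mp hQ.1) (by simp)
    | @cons _ w' _ hxw' A =>
      obtain rfl : w = w' := by simpa using h
      obtain ⟨hQp, hxQ⟩ := (cons_isPath_iff _ _).mp hQ.1
      obtain ⟨hAp, hxA⟩ := (cons_isPath_iff _ _).mp hA.1
      have hQc : IsPathOf G c Q := ⟨hQp, fun e he => hQ.2 e (by simp [he])⟩
      have hAc : IsPathOf G c A := ⟨hAp, fun e he => hA.2 e (by simp [he])⟩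
      suffices Q = A by rw [this]
      by_cases hwy : w = y
      · subst hwy
        rw [(isPath_iff_nil.mp hQp).eq_nil, (isPath_iff_nil.mp hAp).eq_nil]
      refine ih hQc hAc ?_
      have hwx : s(w, x) ∈ c.edges := Sym2.eq_swap ▸ hQ.2 _ (by simp)
      have hQnil : ¬Q.Nil := not_nil_of_ne hwy
      have hAnil : ¬A.Nil := not_nil_of_ne hwy
      rcases hc.eq_or_eq_or_eq_of_mk_mem_edges (hQc.2 _ (mk_start_snd_mem_edges hQnil))
        (hAc.2 _ (mk_start_snd_mem_edges hAnil)) hwx with hs | hs | hs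
      · exact hs
      · exact absurd (hs ▸ Q.getVert_mem_support 1) hxQ
      · exact absurd (hs ▸ A.getVert_mem_support 1) hxA

theorem isPathOf_rotate [DecidableEq V] (hx : x ∈ c.support) {Q : G.Walk y z} :
    IsPathOf G (c.rotate x hx) Q ↔ IsPathOf G c Q := by
  simp only [IsPathOf, (c.rotate_edges x hx).perm.mem_iff]

theorem SimpleGraph.Walk.IsCycle.exists_arcs (hc : c.IsCycle) (hxy : x ≠ y) (hx : x ∈ c.support)
    (hy : y ∈ c.support) :
    ∃ A B : G.Walk x y, IsPathOf G c A ∧ IsPathOf G c B ∧ A.length + B.length = c.length ∧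
      (∀ z ∈ A.support, z ∈ B.support → z = x ∨ z = y) ∧
      ∀ Q : G.Walk x y, IsPathOf G c Q → Q = A ∨ Q = B := by
  classical
  simp only [← isPathOf_rotate hx, ← c.length_rotate x hx]
  set c' := c.rotate x hx
  have hc' : c'.IsCycle := hc.rotate hx
  have hy' : y ∈ c'.support := (c.mem_support_rotate_iff x hx).mpr hy
  have hspec := c'.take_spec hy'
  set A := c'.takeUntil y hy'
  set D := c'.dropUntil y hy'
  have hAnil : ¬A.Nil := not_nil_of_ne hxy
  have hDnil : ¬D.Nil := not_nil_of_ne hxy.symm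
  have hA : IsPathOf G c' A := ⟨hc'.isPath_takeUntil hy', c'.edges_takeUntil_subset_edges hy'⟩
  have hB : IsPathOf G c' D.reverse := by
    have hcAD := hc'
    rw [← hspec] at hcAD
    refine ⟨(hcAD.isPath_of_append_right hAnil).reverse, fun e he => ?_⟩
    exact c'.edges_dropUntil_subset_edges hy' (by simpa using he)
  refine ⟨A, D.reverse, hA, hB, ?_, ?_, fun Q hQ => ?_⟩
  · rw [length_reverse, ← length_append, hspec]
  · intro z hzA hzB
    by_contra! hz
    have hnd : (A.support.tail ++ D.support.tail).Nodup := tail_support_append A D ▸ hspec ▸ hc'.2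
    have hzA' : z ∈ A.support.tail := by
      rw [← A.cons_tail_support] at hzA; exact (List.mem_cons.mp hzA).resolve_left hz.1
    have hzD' : z ∈ D.support.tail := by
      rw [support_reverse, List.mem_reverse, ← D.cons_tail_support] at hzB
      exact (List.mem_cons.mp hzB).resolve_left hz.2
    exact List.disjoint_of_nodup_append hnd hzA' hzD'
  · have hsnd : A.snd ≠ D.reverse.snd := by
      intro h
      have hDe : s(x, A.snd) ∈ D.edges := by
        simpa [h] using mk_start_snd_mem_edges (p := D.reverse) (by simpa using hDnil)
      exact hc'.isTrail.disjoint_edges_takeUntil_dropUntil hy' (mk_start_snd_mem_edges hAnil) hDe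
    rcases hc'.eq_or_eq_or_eq_of_mk_mem_edges (hA.2 _ (mk_start_snd_mem_edges hAnil))
      (hB.2 _ (mk_start_snd_mem_edges (by simpa using hDnil)))
      (hQ.2 _ (mk_start_snd_mem_edges (not_nil_of_ne hxy))) with h | h | h
    · exact absurd h hsnd
    · exact .inl (hQ.eq_of_snd_eq hc' hA h.symm)
    · exact .inr (hQ.eq_of_snd_eq hc' hB h.symm)

theorem IsPathOf.cycleDist_le {Q : G.Walk x y} (hQ : IsPathOf G c Q) :
    cycleDist G c x y ≤ Q.length :=
  Nat.sInf_le ⟨Q, hQ, rfl⟩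

theorem exists_isPathOf_length_eq_cycleDist (hc : c.IsCycle) (hx : x ∈ c.support)
    (hy : y ∈ c.support) : ∃ Q : G.Walk x y, IsPathOf G c Q ∧ Q.length = cycleDist G c x y := by
  refine Nat.sInf_mem (s := {n | ∃ Q : G.Walk x y, IsPathOf G c Q ∧ Q.length = n}) ?_
  by_cases hxy : x = y
  · subst hxy
    exact ⟨0, nil, ⟨IsPath.nil, by simp⟩, rfl⟩
  · obtain ⟨A, -, hA, -⟩ := hc.exists_arcs hxy hx hy
    exact ⟨_, A, hA, rfl⟩

theorem cycleDist_triangle (hc : c.IsCycle) (hx : x ∈ c.support) (hy : y ∈ c.support)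
    (hz : z ∈ c.support) : cycleDist G c x y ≤ cycleDist G c x z + cycleDist G c z y := by
  classical
  obtain ⟨Q₁, hQ₁, h₁⟩ := exists_isPathOf_length_eq_cycleDist hc hx hz
  obtain ⟨Q₂, hQ₂, h₂⟩ := exists_isPathOf_length_eq_cycleDist hc hz hy
  have hQ : IsPathOf G c (Q₁.append Q₂).bypass := by
    refine ⟨bypass_isPath _, fun e he => ?_⟩
    rcases List.mem_append.mp (edges_append Q₁ Q₂ ▸ edges_bypass_subset_edges _ he) with he | he
    exacts [hQ₁.2 e he, hQ₂.2 e he]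
  calc cycleDist G c x y ≤ (Q₁.append Q₂).bypass.length := hQ.cycleDist_le
    _ ≤ (Q₁.append Q₂).length := length_bypass_le_length _
    _ = _ := by rw [length_append, h₁, h₂]

theorem IsPathOf.ne_of_ne {Q Q' : G.Walk x y} (hQ : IsPathOf G c Q) (hQ' : IsPathOf G c Q')
    (hne : Q ≠ Q') : x ≠ y := by
  rintro rfl
  exact hne ((isPath_iff_nil.mp hQ.1).eq_nil.trans (isPath_iff_nil.mp hQ'.1).eq_nil.symm)

theorem IsPathOf.length_add_length_of_ne (hc : c.IsCycle) {Q Q' : G.Walk x y}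
    (hQ : IsPathOf G c Q) (hQ' : IsPathOf G c Q') (hne : Q ≠ Q') :
    Q.length + Q'.length = c.length := by
  have hxy := hQ.ne_of_ne hQ' hne
  obtain ⟨A, B, hA, hB, hsum, -, hall⟩ := hc.exists_arcs hxy
    (hQ.mem_support hxy Q.start_mem_support) (hQ.mem_support hxy Q.end_mem_support)
  rcases hall Q hQ with rfl | rfl <;> rcases hall Q' hQ' with rfl | rfl <;> grind

theorem IsPathOf.eq_or_eq_of_mem_support_of_ne (hc : c.IsCycle) {Q Q' : G.Walk x y}
    (hQ : IsPathOf G c Q) (hQ' : IsPathOf G c Q') (hne : Q ≠ Q') (hz : z ∈ Q.support)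
    (hz' : z ∈ Q'.support) : z = x ∨ z = y := by
  have hxy := hQ.ne_of_ne hQ' hne
  obtain ⟨A, B, hA, hB, -, hAB, hall⟩ := hc.exists_arcs hxy
    (hQ.mem_support hxy Q.start_mem_support) (hQ.mem_support hxy Q.end_mem_support)
  rcases hall Q hQ with rfl | rfl <;> rcases hall Q' hQ' with rfl | rfl
  exacts [absurd rfl hne, hAB z hz hz', hAB z hz' hz, absurd rfl hne]

theorem IsPathOf.length_add_cycleDist_le (hc : c.IsCycle) {Q : G.Walk x y} (hQ : IsPathOf G c Q)
    (hxy : x ≠ y) : Q.length + cycleDist G c x y ≤ c.length := by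
  obtain ⟨A, B, hA, hB, hsum, -, hall⟩ := hc.exists_arcs hxy
    (hQ.mem_support hxy Q.start_mem_support) (hQ.mem_support hxy Q.end_mem_support)
  have := hA.cycleDist_le
  have := hB.cycleDist_le
  rcases hall Q hQ with rfl | rfl <;> omega

theorem IsPathOf.length_eq_cycleDist_or (hc : c.IsCycle) {Q : G.Walk x y} (hQ : IsPathOf G c Q)
    (hxy : x ≠ y) :
    Q.length = cycleDist G c x y ∨ Q.length + cycleDist G c x y = c.length := by
  obtain ⟨Q', hQ', hlen⟩ := exists_isPathOf_length_eq_cycleDist hc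
    (hQ.mem_support hxy Q.start_mem_support) (hQ.mem_support hxy Q.end_mem_support)
  by_cases hne : Q = Q'
  · exact .inl (hne ▸ hlen)
  · exact .inr (hlen ▸ hQ.length_add_length_of_ne hc hQ' hne)

theorem IsPathOf.length_le_two_mul_cycleDist (hc : c.IsCycle) {Q : G.Walk x y}
    (hQ : IsPathOf G c Q) (hz : z ∈ Q.support) (hzx : z ≠ x) (hzy : z ≠ y)
    (hxz : cycleDist G c x z ≤ cycleDist G c x y) (hzy' : cycleDist G c z y ≤ cycleDist G c x y) :
    Q.length ≤ 2 * cycleDist G c x y := by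
  classical
  have hxy : x ≠ y := by
    rintro rfl
    exact hzx (by simpa [(isPath_iff_nil.mp hQ.1).eq_nil] using hz)
  have hsplit : (Q.takeUntil z hz).length + (Q.dropUntil z hz).length = Q.length := by
    rw [← length_append, take_spec]
  have h₁ : IsPathOf G c (Q.takeUntil z hz) :=
    ⟨hQ.1.takeUntil hz, fun e he => hQ.2 e (Q.edges_takeUntil_subset_edges hz he)⟩
  have h₂ : IsPathOf G c (Q.dropUntil z hz) :=
    ⟨hQ.1.dropUntil hz, fun e he => hQ.2 e (Q.edges_dropUntil_subset_edges hz he)⟩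
  have hpos₁ := not_nil_iff_lt_length.mp (not_nil_of_ne hzx.symm : ¬(Q.takeUntil z hz).Nil)
  have hpos₂ := not_nil_iff_lt_length.mp (not_nil_of_ne hzy : ¬(Q.dropUntil z hz).Nil)
  have := hQ.length_add_cycleDist_le hc hxy
  rcases h₁.length_eq_cycleDist_or hc hzx.symm with e₁ | e₁ <;>
    rcases h₂.length_eq_cycleDist_or hc hzy with e₂ | e₂ <;> omega

theorem SimpleGraph.Walk.IsCycle.length_le_of_suppSet_eq_union {w : G.Walk r r} (hw : w.IsCycle)
    {A B : G.Walk x y} (hxy : x ≠ y) (h : suppSet w = suppSet A ∪ suppSet B) :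
    w.length ≤ A.length + B.length := by
  classical
  have hcard : w.support.tail.toFinset.card = w.length := by
    rw [List.toFinset_card_of_nodup hw.2, List.length_tail, length_support, Nat.add_sub_cancel]
  have htail : ∀ a, a ∈ w.support.tail ↔ a ∈ w.support := fun a =>
    ⟨List.mem_of_mem_tail, fun ha => ((mem_support_iff w).mp ha).elim
      (fun h => h ▸ end_mem_tail_support hw.not_nil) id⟩
  have hset : w.support.tail.toFinset = A.support.toFinset ∪ B.support.toFinset := by
    ext a
    simp only [List.mem_toFinset, Finset.mem_union, htail]
    exact Set.ext_iff.mp h a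
  have hpair : ({x, y} : Finset V) ⊆ A.support.toFinset ∩ B.support.toFinset := by
    intro a ha
    rcases Finset.mem_insert.mp ha with rfl | ha
    · simp
    · simp [Finset.mem_singleton.mp ha]
  have h₂ := Finset.card_pair hxy ▸ Finset.card_le_card hpair
  have hA := length_support A ▸ A.support.toFinset_card_le
  have hB := length_support B ▸ B.support.toFinset_card_le
  have := Finset.card_union_add_card_inter A.support.toFinset B.support.toFinset
  rw [← hset, hcard] at this
  omega

theorem SimpleGraph.Walk.isChordless_of_forall_length_le {p : G.Walk u v}
    (hmin : ∀ W : G.Walk u v, p.length ≤ W.length) : p.IsChordless := by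
  rw [isChordless_iff_forall_mem_edges]
  intro a b ha hb hab
  obtain ⟨i, rfl, hi⟩ := mem_support_iff_exists_getVert.mp ha
  obtain ⟨j, rfl, hj⟩ := mem_support_iff_exists_getVert.mp hb
  wlog hij : i ≤ j generalizing i j
  · rw [Sym2.eq_swap]
    exact this j hj hb i hi ha hab.symm (by omega)
  have hne : i ≠ j := by rintro rfl; exact hab.ne rfl
  have hshort := hmin ((p.take i).append (cons hab (p.drop j)))
  simp only [length_append, take_length, length_cons, drop_length] at hshort
  obtain rfl : j = i + 1 := by omega
  exact (mk_mem_edges_iff_exists p).mpr ⟨i, by omega, rfl⟩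

theorem IsInducedCycle.isPathOf (hc : IsInducedCycle G c) {w : G.Walk u v}
    (hw : w.IsPath) (hsub : ∀ z ∈ w.support, z ∈ c.support) : IsPathOf G c w := by
  refine ⟨hw, fun e he => ?_⟩
  induction e using Sym2.ind with
  | h a b =>
    exact hc.2 a b (hsub a (w.fst_mem_support_of_mem_edges he))
      (hsub b (w.snd_mem_support_of_mem_edges he)) (w.adj_of_mem_edges he)

theorem ArcPair.isChordless_right (hc : IsInducedCycle G c) {C1 C2 : G.Walk u v}
    (harc : ArcPair G c C1 C2) (hne : C1 ≠ C2) (hnadj : ¬G.Adj u v) : C2.IsChordless := by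
  obtain ⟨hC1, hC2, -, hcover⟩ := harc
  have huv := hC1.ne_of_ne hC2 hne
  rw [isChordless_iff_forall_mem_edges]
  intro a b ha hb hab
  refine (hcover _ (hc.2 a b (hC2.mem_support huv ha) (hC2.mem_support huv hb) hab)).resolve_left
    fun h => ?_
  rcases hC1.eq_or_eq_of_mem_support_of_ne hc.1 hC2 hne (C1.fst_mem_support_of_mem_edges h) ha
    with rfl | rfl <;>
  rcases hC1.eq_or_eq_of_mem_support_of_ne hc.1 hC2 hne (C1.snd_mem_support_of_mem_edges h) hb
    with rfl | rfl
  exacts [hab.ne rfl, hnadj hab, hnadj hab.symm, hab.ne rfl]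

theorem isHoleOn_union {p q : G.Walk u v} (hp : p.IsPath) (hq : q.IsPath) (hpc : p.IsChordless)
    (hqc : q.IsChordless) (huv : u ≠ v) (hnadj : ¬G.Adj u v)
    (hmeet : ∀ z ∈ p.support, z ∈ q.support → z = u ∨ z = v)
    (hmix : ∀ a ∈ p.support, ∀ b ∈ q.support, G.Adj a b → (a = u ∨ a = v) ∨ (b = u ∨ b = v)) :
    IsHoleOn G (suppSet p ∪ suppSet q) := by
  have htwo (w : G.Walk u v) : 2 ≤ w.length :=
    (w.reachable.one_lt_dist_of_ne_of_not_adj huv hnadj).trans_le (dist_le w)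
  have hends (w : G.Walk u v) (z : V) (hz : z = u ∨ z = v) : z ∈ w.support := by
    rcases hz with rfl | rfl
    exacts [w.start_mem_support, w.end_mem_support]
  have hsupp (z : V) : z ∈ (p.append q.reverse).support ↔ z ∈ p.support ∨ z ∈ q.support := by
    rw [mem_support_append_iff, support_reverse, List.mem_reverse]
  have hcyc : (p.append q.reverse).IsCycle := by
    refine hp.isCycle_append hq.reverse (fun z hzp hzq => ?_) (.inl (htwo p))
    have hzq' : z ∈ q.support := by simpa using List.mem_of_mem_tail hzq
    rcases hmeet z (List.mem_of_mem_tail hzp) hzq' with rfl | rfl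
    · exact (List.nodup_cons.mp (p.cons_tail_support ▸ hp.support_nodup)).1 hzp
    · exact (List.nodup_cons.mp (q.reverse.cons_tail_support ▸ hq.reverse.support_nodup)).1 hzq
  have hsame : ∀ a b, a ∈ (p.append q.reverse).support → b ∈ (p.append q.reverse).support →
      G.Adj a b → (a ∈ p.support ∧ b ∈ p.support) ∨ (a ∈ q.support ∧ b ∈ q.support) := by
    intro a b ha hb hab
    rcases (hsupp a).mp ha with ha | ha <;> rcases (hsupp b).mp hb with hb | hb
    · exact .inl ⟨ha, hb⟩
    · exact (hmix a ha b hb hab).elim (fun h => .inr ⟨hends q a h, hb⟩)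
        (fun h => .inl ⟨ha, hends p b h⟩)
    · exact (hmix b hb a ha hab.symm).elim (fun h => .inr ⟨ha, hends q b h⟩)
        (fun h => .inl ⟨hends p a h, hb⟩)
    · exact .inr ⟨ha, hb⟩
  refine ⟨u, p.append q.reverse, ⟨⟨hcyc, fun a b ha hb hab => ?_⟩, ?_⟩, ?_⟩
  · rw [edges_append, List.mem_append, edges_reverse, List.mem_reverse]
    rcases hsame a b ha hb hab with ⟨ha, hb⟩ | ⟨ha, hb⟩
    exacts [.inl (hpc.mem_edges ha hb hab), .inr (hqc.mem_edges ha hb hab)]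
  · have := htwo p
    have := htwo q
    rw [length_append, length_reverse]
    omega
  · ext z
    exact hsupp z

theorem CGood.cycleDist_le_length (hC : IsShortestEvenHole G c) {R : G.Walk x y} (hxy : x ≠ y)
    (hR : CGood G c R) : cycleDist G c x y ≤ R.length := by
  obtain ⟨Q, hQ, r', w, hw, hsupp⟩ := hR
  have h₁ := hC.2 r' w hw.1
  have h₂ := hw.1.1.1.1.length_le_of_suppSet_eq_union hxy hsupp
  have h₃ := hQ.length_add_cycleDist_le hC.1.1.1.1 hxy
  omega

theorem ArcPair.cycleDist_eq (hc : c.IsCycle) {C1 C2 : G.Walk u v} (harc : ArcPair G c C1 C2)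
    (hlt : C1.length < C2.length) : cycleDist G c u v = C1.length := by
  obtain ⟨hC1, hC2, hsum, -⟩ := harc
  have hne : C1 ≠ C2 := fun h => hlt.ne (h ▸ rfl)
  have := hC1.cycleDist_le
  have := hC2.cycleDist_le
  rcases hC1.length_eq_cycleDist_or hc (hC1.ne_of_ne hC2 hne) with h | h <;> omega

namespace WorstCShortcut

variable {P : G.Walk u v}

/-- A shortest `xy`-path of `G` that is no longer than a worst shortcut `P` is either adjacent
(so an edge of the hole), `C`-good, or itself a `C`-bad shortcut, which `P` beats. -/
theorem cycleDist_le_or (hC : IsShortestEvenHole G c) (hP : WorstCShortcut G c P) (hxy : x ≠ y)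
    (hx : x ∈ c.support) (hy : y ∈ c.support) (W : G.Walk x y) (hW : W.length ≤ P.length) :
    cycleDist G c x y ≤ G.dist x y ∨
      (G.dist x y = P.length ∧ cycleDist G c x y ≤ cycleDist G c u v) := by
  have hdist := dist_le W
  by_cases hadj : G.Adj x y
  · have hedge : IsPathOf G c hadj.toWalk :=
      ⟨hadj.isPath_toWalk, by simp [hC.1.1.1.2 x y hx hy hadj]⟩
    rw [dist_eq_one_iff_adj.mpr hadj]
    exact .inl (hadj.length_toWalk ▸ hedge.cycleDist_le)
  obtain ⟨p, hp, hplen⟩ := W.reachable.exists_path_of_dist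
  have h2 : 1 < p.length := hplen ▸ W.reachable.one_lt_dist_of_ne_of_not_adj hxy hadj
  obtain ⟨Q, hQ, hQlen⟩ := exists_isPathOf_length_eq_cycleDist hC.1.1.1.1 hx hy
  have hshort : CShortcut G c p := ⟨h2, hQlen ▸ hplen ▸ dist_le Q, by have := hP.2.1.2.2; omega⟩
  by_cases hgood : CGood G c p
  · exact .inl (hplen ▸ hgood.cycleDist_le_length hC hxy)
  · rcases hP.2.2.2 x y p ⟨hp, hxy, hadj, hx, hy⟩ hshort hgood with h | h
    · omega
    · exact .inr ⟨hplen ▸ h.1.symm, h.2⟩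

theorem cycleDist_le_of_length_lt (hC : IsShortestEvenHole G c) (hP : WorstCShortcut G c P)
    (hxy : x ≠ y) (hx : x ∈ c.support) (hy : y ∈ c.support) (W : G.Walk x y)
    (hW : W.length < P.length) : cycleDist G c x y ≤ W.length := by
  have := dist_le W
  rcases hP.cycleDist_le_or hC hxy hx hy W hW.le with h | h <;> omega

theorem cycleDist_le_of_length_le (hC : IsShortestEvenHole G c) (hP : WorstCShortcut G c P)
    (hxy : x ≠ y) (hx : x ∈ c.support) (hy : y ∈ c.support) (W : G.Walk x y)
    (hW : W.length ≤ P.length) : cycleDist G c x y ≤ cycleDist G c u v := by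
  have := dist_le W
  have := hP.2.1.2.1
  rcases hP.cycleDist_le_or hC hxy hx hy W hW with h | h <;> omega

theorem length_le (hC : IsShortestEvenHole G c) (hP : WorstCShortcut G c P) (W : G.Walk u v) :
    P.length ≤ W.length := by
  by_contra! h
  have := hP.cycleDist_le_of_length_lt hC hP.1.2.1 hP.1.2.2.2.1 hP.1.2.2.2.2 W h
  have := hP.2.1.2.1
  omega

/-- The hole on `P ∪ C2` is odd, since otherwise `P` would be `C`-good; by parity this pins
down `‖P‖ = d_C(u,v) - 1`. -/
theorem length_add_one_eq (hC : IsShortestEvenHole G c) (hP : WorstCShortcut G c P)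
    (hshallow : CShallow G c P) {C1 C2 : G.Walk u v} (harc : ArcPair G c C1 C2)
    (hlt : C1.length < C2.length) : P.length + 1 = C1.length := by
  have hd := harc.cycleDist_eq hC.1.1.1.1 hlt
  obtain ⟨r', H, hH, hsupp⟩ := hshallow.2 C1 C2 harc hlt.le
  have hPH : IsPathOf G H P :=
    hH.1.isPathOf hP.1.1 fun z hz => (Set.ext_iff.mp hsupp z).mpr (.inl hz)
  have hC2H : IsPathOf G H C2 :=
    hH.1.isPathOf harc.2.1.1 fun z hz => (Set.ext_iff.mp hsupp z).mpr (.inr hz)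
  have hPd := hP.2.1.2.1
  have hne : P ≠ C2 := by rintro rfl; omega
  have hHlen := hPH.length_add_length_of_ne hH.1.1 hC2H hne
  have hsum := harc.2.2.1
  have hodd : ¬Even H.length := fun heven => hP.2.2.1
    ⟨C2, harc.2.1, r', H, ⟨⟨hH, heven⟩, fun y w hw => by have := hC.2 y w hw; omega⟩, hsupp⟩
  have hceven := Nat.even_iff.mp hC.1.2
  have := hshallow.1
  rw [Nat.not_even_iff] at hodd
  omega

theorem eq_or_eq_of_mem_support (hC : IsShortestEvenHole G c) (hP : WorstCShortcut G c P)
    {Q : G.Walk u v} (hQP : Q.length ≤ P.length) (hQd : Q.length < cycleDist G c u v)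
    (hz : z ∈ Q.support) (hzc : z ∈ c.support) : z = u ∨ z = v := by
  classical
  by_contra! hne
  have hsplit : (Q.takeUntil z hz).length + (Q.dropUntil z hz).length = Q.length := by
    rw [← length_append, take_spec]
  have hpos₁ := not_nil_iff_lt_length.mp (not_nil_of_ne hne.1.symm : ¬(Q.takeUntil z hz).Nil)
  have hpos₂ := not_nil_iff_lt_length.mp (not_nil_of_ne hne.2 : ¬(Q.dropUntil z hz).Nil)
  have hu := hP.1.2.2.2.1
  have hv := hP.1.2.2.2.2
  have h₁ := hP.cycleDist_le_of_length_lt hC hne.1.symm hu hzc (Q.takeUntil z hz) (by omega)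
  have h₂ := hP.cycleDist_le_of_length_lt hC hne.2 hzc hv (Q.dropUntil z hz) (by omega)
  have := cycleDist_triangle hC.1.1.1.1 hu hv hzc
  omega

theorem length_le_two_mul_cycleDist_of_adj (hC : IsShortestEvenHole G c)
    (hP : WorstCShortcut G c P) {Q C : G.Walk u v} (hQP : Q.length ≤ P.length)
    (hCc : IsPathOf G c C) {a b : V} (ha : a ∈ Q.support) (hau : a ≠ u) (hav : a ≠ v)
    (hb : b ∈ C.support) (hbu : b ≠ u) (hbv : b ≠ v) (hab : G.Adj a b) :
    C.length ≤ 2 * cycleDist G c u v := by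
  classical
  have hsplit : (Q.takeUntil a ha).length + (Q.dropUntil a ha).length = Q.length := by
    rw [← length_append, take_spec]
  have hpos₁ := not_nil_iff_lt_length.mp (not_nil_of_ne hau.symm : ¬(Q.takeUntil a ha).Nil)
  have hpos₂ := not_nil_iff_lt_length.mp (not_nil_of_ne hav : ¬(Q.dropUntil a ha).Nil)
  have hbc := hCc.mem_support hP.1.2.1 hb
  have h₁ := hP.cycleDist_le_of_length_le hC hbu.symm hP.1.2.2.2.1 hbc
    ((Q.takeUntil a ha).concat hab) (by rw [length_concat]; omega)
  have h₂ := hP.cycleDist_le_of_length_le hC hbv hbc hP.1.2.2.2.2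
    (cons hab.symm (Q.dropUntil a ha)) (by rw [length_cons]; omega)
  exact hCc.length_le_two_mul_cycleDist hC.1.1.1.1 hb hbu hbv h₁ h₂

end WorstCShortcut

end Cycles

theorem stmt3 (G : SimpleGraph V) {r u v : V} (c : G.Walk r r)
    (hC : IsShortestEvenHole G c) (P : G.Walk u v)
    (hworst : WorstCShortcut G c P) (hshallow : CShallow G c P)
    (C1 C2 : G.Walk u v) (harc : ArcPair G c C1 C2) (hlt : C1.length < C2.length) :
    ∀ Puv : G.Walk u v, Puv.IsPath → Puv.length = P.length →
      IsHoleOn G (suppSet Puv ∪ suppSet C2) := by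
  intro Puv hPuv hlen
  have hc : IsInducedCycle G c := hC.1.1.1
  have huv := hworst.1.2.1
  have hnadj := hworst.1.2.2.1
  have hC2 := harc.2.1
  have hd := harc.cycleDist_eq hc.1 hlt
  have hPd := hworst.length_add_one_eq hC hshallow harc hlt
  refine isHoleOn_union hPuv hC2.1
    (Walk.isChordless_of_forall_length_le fun W => hlen ▸ hworst.length_le hC W)
    (harc.isChordless_right hc (fun h => hlt.ne (h ▸ rfl)) hnadj) huv hnadj
    (fun z hz hz₂ => hworst.eq_or_eq_of_mem_support hC hlen.le (by omega) hz
      (hC2.mem_support huv hz₂)) ?_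
  intro a ha b hb hab
  by_contra! h
  have h2d := hworst.length_le_two_mul_cycleDist_of_adj hC hlen.le hC2 ha h.1.1 h.1.2 hb h.2.1
    h.2.2 hab
  have hsum := harc.2.2.1
  have hceven := Nat.even_iff.mp hC.1.2
  obtain ⟨hP2, -, hP4⟩ := hworst.2.1
  omega
end
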